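/- arXiv:2112.07552 — 2 statements merged into one kernel-verified Lean document; each statement's English description precedes it below -/
import Mathlib

section
/- Let V and W be finite types with decidable equality; let a : Fin n → V be the ID attribute of table A, and let B : W → V → Prop be a decidable relation whose pairs are the (Val, ID) pairs of table B. Let mat(a) be the one-hot matrix of a over ℕ and adj(B) the adjacency matrix of B over ℕ. Then for every u : W, the u-th entry of the row vector 𝟙 * mat(a) * (adj(B))ᵀ, where 𝟙 is the all-ones row vector of length n, equals the cardinality of {i : Fin n | B u (a i)}; that is, it equals COUNT(*) grouped by B.Val = u over the natural join A ⋈ B on A.ID = B.ID. -/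
open Matrix

/-- One-hot matrix of a function `f : Fin n → V`: entry `(i, v)` is `1` if `f i = v`, else `0`. -/
def oneHot {n : ℕ} {V : Type*} [DecidableEq V] (f : Fin n → V) : Matrix (Fin n) V ℕ :=
  fun i v => if f i = v then 1 else 0

/-- Adjacency matrix (over ℕ) of a decidable relation. -/
def adj {W V : Type*} (R : W → V → Prop) [∀ w v, Decidable (R w v)] : Matrix W V ℕ :=
  fun w v => if R w v then 1 else 0

/-- The all-ones row vector of length `n` over ℕ. -/
def onesRow (n : ℕ) : Matrix (Fin 1) (Fin n) ℕ := fun _ _ => 1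

/-- `COUNT(*) GROUP BY B.Val` over the join `A ⋈ B` via matrix products:
the `u`-th entry of `𝟙 * mat(a) * adj(B)ᵀ` is the number of rows `i` of `A`
joining with a `B`-row whose value attribute is `u`. -/
theorem groupBy_count_eq {V W : Type*} [Fintype V] [DecidableEq V]
    [Fintype W] [DecidableEq W] {n : ℕ}
    (a : Fin n → V) (B : W → V → Prop) [∀ w v, Decidable (B w v)] :
    ∀ u : W,
      (onesRow n * oneHot a * (adj B)ᵀ) 0 u =
        (Finset.univ.filter (fun i : Fin n => B u (a i))).card := by
  intro u
  simp only [Matrix.mul_apply, Matrix.transpose_apply, onesRow, oneHot, adj, one_mul]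
  rw [show (∑ x : V, (∑ i : Fin n, if a i = x then 1 else 0) * if B u x then 1 else 0)
      = ∑ x : V, ∑ i : Fin n, (if a i = x then 1 else 0) * if B u x then 1 else 0 by
    simp [Finset.sum_mul], Finset.sum_comm]
  rw [Finset.card_filter]
  refine Finset.sum_congr rfl fun i _ => ?_
  rw [Finset.sum_eq_single (a i)]
  · simp
  · intro v _ hv; simp [Ne.symm hv]
  · simp
end

section
/- Let V be a finite type with decidable equality; let a : Fin n → V, aval : Fin n → ℝ be the ID and Val attributes of table A, and let b : Fin m → V, bval : Fin m → ℝ be those of table B. Define mat(A) : Matrix (Fin n) V ℝ by mat(A) i v = aval i if a i = v and 0 otherwise, and mat(B) : Matrix (Fin m) V ℝ by mat(B) j v = bval j if b j = v and 0 otherwise. Then for all i : Fin n and j : Fin m, (mat(A) * (mat(B))ᵀ) i j = aval i * bval j if a i = b j, and = 0 otherwise. -/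
open Matrix

/-- Value-filled matrix of a table: entry `(i, v)` is `val i` if the ID attribute `f i = v`,
else `0`. -/
def valMat {n : ℕ} {V : Type*} [DecidableEq V] (f : Fin n → V) (val : Fin n → ℝ) :
    Matrix (Fin n) V ℝ :=
  fun i v => if f i = v then val i else 0

/-- The value-filled matrix encoding of a natural join: the `(i, j)` entry of
`mat(A) * mat(B)ᵀ` is `aval i * bval j` when `a i = b j`, and `0` otherwise. -/
theorem valMat_mul_transpose {V : Type*} [Fintype V] [DecidableEq V] {n m : ℕ}
    (a : Fin n → V) (aval : Fin n → ℝ) (b : Fin m → V) (bval : Fin m → ℝ) :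
    ∀ (i : Fin n) (j : Fin m),
      (valMat a aval * (valMat b bval)ᵀ) i j =
        if a i = b j then aval i * bval j else 0 := by
  intro i j
  simp only [Matrix.mul_apply, Matrix.transpose_apply, valMat]
  rw [Finset.sum_eq_single (a i)]
  · by_cases h : a i = b j <;> simp [h, eq_comm]
  · intro v _ hv; simp [Ne.symm hv]
  · simp
end
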